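/- Let e = (1,0,0) and let λ = Uni(S²) ⊗ Leb ⊗ Uni(S²) on S² × [0,∞) × S². For every integer k ≥ 4 there exists a constant C_k > 0 such that for all s ≥ 0: λ({(u, h, v) : h ≥ max(10, s/(2k)), ‖u × v‖ ≤ 2/h, and (h/4)^{k−3}·h·|⟨e, u × v⟩| ≤ 2}) ≤ C_k/(1+s)^{k−2}. -/

import Mathlib

open MeasureTheory
open scoped RealInnerProductSpace

noncomputable abbrev E3 : Type := EuclideanSpace ℝ (Fin 3)

/-- The unit sphere `S²` in `ℝ³`. -/
abbrev S2 : Set E3 := Metric.sphere (0 : E3) 1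

/-- The cross product on `ℝ³` realised as `EuclideanSpace ℝ (Fin 3)`. -/
noncomputable def cross (u v : E3) : E3 :=
  WithLp.toLp 2 (![u 1 * v 2 - u 2 * v 1, u 2 * v 0 - u 0 * v 2, u 0 * v 1 - u 1 * v 0] : Fin 3 → ℝ)

/-- The (unnormalised) surface measure on the unit sphere `S² ⊂ ℝ³`. -/
noncomputable def sphereVol : Measure ↥S2 := (volume : Measure E3).toSphere

/-- The uniform probability measure on the unit sphere `S² ⊂ ℝ³`. -/
noncomputable def uniSphere : Measure ↥S2 := (sphereVol Set.univ)⁻¹ • sphereVol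

/-- The measure `λ = Uni(S²) ⊗ Leb ⊗ Uni(S²)` on `S² × [0,∞) × S²`. -/
noncomputable def lambdaMeasure : Measure (↥S2 × ℝ × ↥S2) :=
  uniSphere.prod ((volume.restrict (Set.Ici (0 : ℝ))).prod uniSphere)

/-- The first coordinate unit vector `e = (1,0,0)` in `ℝ³`. -/
noncomputable def e3 : E3 := WithLp.toLp 2 (![1, 0, 0] : Fin 3 → ℝ)

set_option linter.unusedVariables false

namespace TrapAux
open Set Metric

lemma inner3 (x y : E3) : ⟪x, y⟫ = x 0 * y 0 + x 1 * y 1 + x 2 * y 2 := by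
  simp [PiLp.inner_apply, RCLike.inner_apply, Fin.sum_univ_three]
  ring

@[simp] lemma cross0 (u v : E3) : cross u v 0 = u 1 * v 2 - u 2 * v 1 := rfl
@[simp] lemma cross1 (u v : E3) : cross u v 1 = u 2 * v 0 - u 0 * v 2 := rfl
@[simp] lemma cross2 (u v : E3) : cross u v 2 = u 0 * v 1 - u 1 * v 0 := rfl
@[simp] lemma e3_0 : (e3 : E3) 0 = 1 := rfl
@[simp] lemma e3_1 : (e3 : E3) 1 = 0 := rfl
@[simp] lemma e3_2 : (e3 : E3) 2 = 0 := rfl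

lemma lagrange (u v : E3) : ⟪cross u v, cross u v⟫ = ⟪u,u⟫*⟪v,v⟫ - ⟪u,v⟫^2 := by
  simp only [inner3, cross0, cross1, cross2]; ring

lemma triple (u v : E3) : ⟪e3, cross u v⟫ = -⟪cross u e3, v⟫ := by
  simp only [inner3, cross0, cross1, cross2, e3_0, e3_1, e3_2]; ring

lemma inner_self_cross (u v : E3) : ⟪u, cross u v⟫ = 0 := by
  simp only [inner3, cross0, cross1, cross2]; ring

lemma triple2 (u n y : E3) : ⟪cross u n, y⟫ = -⟪n, cross u y⟫ := by
  simp only [inner3, cross0, cross1, cross2]; ring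

lemma smul_apply' (t : ℝ) (v : E3) (i : Fin 3) : (t • v) i = t * v i := rfl

lemma cross_smul_right (u v : E3) (t : ℝ) : cross u (t • v) = t • cross u v := by
  ext i
  fin_cases i <;> simp [cross, smul_apply'] <;> ring

lemma cross_smul_left (u v : E3) (t : ℝ) : cross (t • u) v = t • cross u v := by
  ext i
  fin_cases i <;> simp [cross, smul_apply'] <;> ring

lemma norm_sq_eq (x : E3) : ‖x‖^2 = x 0^2 + x 1^2 + x 2^2 := by
  rw [← real_inner_self_eq_norm_sq, inner3]; ring

lemma abs_coord_le (x : E3) (i : Fin 3) : |x i| ≤ ‖x‖ := by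
  have h : x i ^ 2 ≤ ‖x‖ ^ 2 := by
    rw [norm_sq_eq]; fin_cases i <;> beta_reduce <;>
      simp only [Fin.zero_eta, Fin.mk_one, Fin.reduceFinMk] <;>
      nlinarith [sq_nonneg (x 0), sq_nonneg (x 1), sq_nonneg (x 2)]
  calc |x i| = Real.sqrt (x i ^ 2) := (Real.sqrt_sq_eq_abs _).symm
    _ ≤ Real.sqrt (‖x‖ ^ 2) := Real.sqrt_le_sqrt h
    _ = ‖x‖ := Real.sqrt_sq (norm_nonneg _)

lemma volume_box (c0 c1 c2 : ℝ) :
    volume {z : E3 | |z 0| ≤ c0 ∧ |z 1| ≤ c1 ∧ |z 2| ≤ c2}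
      = ENNReal.ofReal (2*c0) * ENNReal.ofReal (2*c1) * ENNReal.ofReal (2*c2) := by
  have hset : {z : E3 | |z 0| ≤ c0 ∧ |z 1| ≤ c1 ∧ |z 2| ≤ c2}
      = (MeasurableEquiv.toLp 2 (Fin 3 → ℝ)).symm ⁻¹'
        (Set.pi Set.univ fun i => Icc (-(![c0,c1,c2] i)) (![c0,c1,c2] i)) := by
    ext z
    simp only [Set.mem_setOf_eq, Set.mem_preimage, Set.mem_pi, Set.mem_univ, forall_true_left,
      Set.mem_Icc, ← abs_le]
    constructor
    · rintro ⟨h0, h1, h2⟩ i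
      fin_cases i <;> simpa
    · intro h
      refine ⟨?_, ?_, ?_⟩
      · simpa using h 0
      · simpa using h 1
      · simpa using h 2
  rw [hset,
    (EuclideanSpace.volume_preserving_symm_measurableEquiv_toLp (Fin 3)).measure_preimage
      (MeasurableSet.univ_pi fun i => measurableSet_Icc).nullMeasurableSet,
    volume_pi_pi, Fin.prod_univ_three]
  simp only [Matrix.cons_val_zero, Matrix.cons_val_one, Matrix.head_cons, Real.volume_Icc,
    Matrix.cons_val_two, Matrix.tail_cons, sub_neg_eq_add, ← two_mul]

end TrapAux

namespace TrapAux
open Set Metric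
open scoped Pointwise

lemma inner_cross_right_self (u v : E3) : ⟪v, cross u v⟫ = 0 := by
  simp only [inner3, cross0, cross1, cross2]; ring

lemma continuous_cross : Continuous fun p : E3 × E3 => cross p.1 p.2 := by
  have h1 : ∀ i : Fin 3, Continuous fun p : E3 × E3 => p.1 i :=
    fun i => (PiLp.continuous_apply 2 (fun _ : Fin 3 => ℝ) i).comp continuous_fst
  have h2 : ∀ i : Fin 3, Continuous fun p : E3 × E3 => p.2 i :=
    fun i => (PiLp.continuous_apply 2 (fun _ : Fin 3 => ℝ) i).comp continuous_snd
  refine (PiLp.continuous_toLp 2 _).comp (f := fun p : E3 × E3 => (cross p.1 p.2).ofLp) ?_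
  apply continuous_pi
  intro i
  fin_cases i <;> beta_reduce <;>
    simp only [Fin.zero_eta, Fin.mk_one, Fin.reduceFinMk, cross0, cross1, cross2] <;>
    exact (((h1 _).mul (h2 _)).sub ((h1 _).mul (h2 _)))

lemma norm_cross_le (u v : E3) (hu : ‖u‖ = 1) (hv : ‖v‖ = 1) : ‖cross u v‖ ≤ 1 := by
  have hl := lagrange u v
  have h1 : ⟪u,u⟫ = 1 := by rw [real_inner_self_eq_norm_sq, hu]; norm_num
  have h2 : ⟪v,v⟫ = 1 := by rw [real_inner_self_eq_norm_sq, hv]; norm_num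
  have h3 : ⟪cross u v, cross u v⟫ = ‖cross u v‖^2 := real_inner_self_eq_norm_sq _
  nlinarith [norm_nonneg (cross u v), sq_nonneg ⟪u,v⟫]

lemma volume_le_frame_box {f0 f1 f2 : E3} (hON : Orthonormal ℝ ![f0, f1, f2]) (c0 c1 c2 : ℝ) :
    volume {y : E3 | |⟪f0, y⟫| ≤ c0 ∧ |⟪f1, y⟫| ≤ c1 ∧ |⟪f2, y⟫| ≤ c2}
      = ENNReal.ofReal (2*c0) * ENNReal.ofReal (2*c1) * ENNReal.ofReal (2*c2) := by
  have hcard : Fintype.card (Fin 3) = Module.finrank ℝ E3 := by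
    simp [finrank_euclideanSpace_fin]
  let b : OrthonormalBasis (Fin 3) ℝ E3 :=
    OrthonormalBasis.mk hON
      (le_of_eq (hON.linearIndependent.span_eq_top_of_card_eq_finrank hcard).symm)
  have hb0 : (b 0 : E3) = f0 := by simp [b, OrthonormalBasis.coe_mk]
  have hb1 : (b 1 : E3) = f1 := by simp [b, OrthonormalBasis.coe_mk]
  have hb2 : (b 2 : E3) = f2 := by simp [b, OrthonormalBasis.coe_mk]
  have hmeas : MeasurableSet {z : E3 | |z 0| ≤ c0 ∧ |z 1| ≤ c1 ∧ |z 2| ≤ c2} := by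
    simp only [Set.setOf_and]
    exact ((isClosed_le ((PiLp.continuous_apply 2 (fun _ : Fin 3 => ℝ) (0 : Fin 3)).abs) continuous_const).measurableSet).inter
      (((isClosed_le ((PiLp.continuous_apply 2 (fun _ : Fin 3 => ℝ) (1 : Fin 3)).abs) continuous_const).measurableSet).inter
        ((isClosed_le ((PiLp.continuous_apply 2 (fun _ : Fin 3 => ℝ) (2 : Fin 3)).abs) continuous_const).measurableSet))
  have hset : {y : E3 | |⟪f0, y⟫| ≤ c0 ∧ |⟪f1, y⟫| ≤ c1 ∧ |⟪f2, y⟫| ≤ c2}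
      = b.repr ⁻¹' {z : E3 | |z 0| ≤ c0 ∧ |z 1| ≤ c1 ∧ |z 2| ≤ c2} := by
    ext y
    simp only [Set.mem_setOf_eq, Set.mem_preimage, OrthonormalBasis.repr_apply_apply,
      hb0, hb1, hb2]
  rw [hset, b.measurePreserving_repr.measure_preimage hmeas.nullMeasurableSet, volume_box]

lemma sector_vol_bound (u : E3) (hu : ‖u‖ = 1) (hw : cross u e3 ≠ 0) {a b : ℝ}
    (ha : 0 ≤ a) (hb : 0 ≤ b) :
    volume {y : E3 | ‖y‖ ≤ 1 ∧ ‖cross u y‖ ≤ a ∧ |⟪cross u e3, y⟫| ≤ b}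
      ≤ ENNReal.ofReal (8 * (b / ‖cross u e3‖) * a) := by
  set w := cross u e3 with hwdef
  have hr : 0 < ‖w‖ := norm_pos_iff.2 hw
  set n : E3 := ‖w‖⁻¹ • w with hn
  set m : E3 := cross u n with hm
  have huu : ⟪u,u⟫ = 1 := by rw [real_inner_self_eq_norm_sq, hu]; norm_num
  have hww : ⟪w,w⟫ = ‖w‖^2 := real_inner_self_eq_norm_sq w
  have huw : ⟪u,w⟫ = 0 := inner_self_cross u e3
  have hun : ⟪u,n⟫ = 0 := by rw [hn, real_inner_smul_right, huw, mul_zero]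
  have hnn : ⟪n,n⟫ = 1 := by
    rw [hn, real_inner_smul_right, real_inner_smul_left, hww, sq]
    field_simp
  have hnorm_n : ‖n‖ = 1 := by
    have h := real_inner_self_eq_norm_sq n
    nlinarith [norm_nonneg n]
  have hum : ⟪u,m⟫ = 0 := inner_self_cross u n
  have hnm : ⟪n,m⟫ = 0 := inner_cross_right_self u n
  have hmm : ⟪m,m⟫ = 1 := by rw [hm, lagrange, huu, hnn, hun]; ring
  have hnorm_m : ‖m‖ = 1 := by
    have h := real_inner_self_eq_norm_sq m
    nlinarith [norm_nonneg m]
  have hON : Orthonormal ℝ ![u, n, m] := by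
    rw [orthonormal_iff_ite]
    intro i j
    fin_cases i <;> fin_cases j <;>
      simp only [Matrix.cons_val_zero, Matrix.cons_val_one, Matrix.head_cons,
        Matrix.cons_val_two, Matrix.tail_cons, Fin.isValue, Fin.zero_eta, Fin.mk_one,
        Fin.reduceFinMk, reduceIte] <;>
      first
        | exact huu | exact hnn | exact hmm | exact hun | exact hum | exact hnm
        | (rw [real_inner_comm]; first | exact hun | exact hum | exact hnm)
  have hsub : {y : E3 | ‖y‖ ≤ 1 ∧ ‖cross u y‖ ≤ a ∧ |⟪cross u e3, y⟫| ≤ b}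
      ⊆ {y : E3 | |⟪u, y⟫| ≤ 1 ∧ |⟪n, y⟫| ≤ b / ‖w‖ ∧ |⟪m, y⟫| ≤ a} := by
    rintro y ⟨hy1, hy2, hy3⟩
    refine ⟨?_, ?_, ?_⟩
    · calc |⟪u, y⟫| ≤ ‖u‖ * ‖y‖ := abs_real_inner_le_norm u y
        _ ≤ 1 := by rw [hu]; simpa using hy1
    · rw [hn, real_inner_smul_left]
      rw [abs_mul, abs_of_nonneg (inv_nonneg.2 hr.le)]
      rw [div_eq_inv_mul]
      exact mul_le_mul_of_nonneg_left hy3 (inv_nonneg.2 hr.le)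
    · have h1 : ⟪m, y⟫ = -⟪n, cross u y⟫ := triple2 u n y
      calc |⟪m, y⟫| = |⟪n, cross u y⟫| := by rw [h1, abs_neg]
        _ ≤ ‖n‖ * ‖cross u y‖ := abs_real_inner_le_norm _ _
        _ ≤ a := by rw [hnorm_n, one_mul]; exact hy2
  calc volume {y : E3 | ‖y‖ ≤ 1 ∧ ‖cross u y‖ ≤ a ∧ |⟪cross u e3, y⟫| ≤ b}
      ≤ volume {y : E3 | |⟪u, y⟫| ≤ 1 ∧ |⟪n, y⟫| ≤ b / ‖w‖ ∧ |⟪m, y⟫| ≤ a} :=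
        measure_mono hsub
    _ = ENNReal.ofReal (2*1) * ENNReal.ofReal (2*(b/‖w‖)) * ENNReal.ofReal (2*a) :=
        volume_le_frame_box hON 1 (b/‖w‖) a
    _ = ENNReal.ofReal (8 * (b / ‖w‖) * a) := by
        rw [← ENNReal.ofReal_mul (by norm_num), ← ENNReal.ofReal_mul (by positivity)]
        congr 1
        ring

end TrapAux

namespace TrapAux
open Set Metric
open scoped Pointwise ENNReal

lemma isClosed_and' {α} [TopologicalSpace α] {p q : α → Prop} (hp : IsClosed {x | p x})
    (hq : IsClosed {x | q x}) : IsClosed {x | p x ∧ q x} := by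
  rw [Set.setOf_and]; exact hp.inter hq

lemma norm_e3 : ‖(e3 : E3)‖ = 1 := by
  have h := norm_sq_eq e3
  simp only [e3_0, e3_1, e3_2] at h
  nlinarith [norm_nonneg (e3 : E3)]

lemma vB_ne_zero : volume (ball (0:E3) 1) ≠ 0 := (measure_ball_pos volume 0 one_pos).ne'
lemma vB_ne_top : volume (ball (0:E3) 1) ≠ ⊤ := measure_ball_lt_top.ne

lemma sphereVol_univ : sphereVol Set.univ = 3 * volume (ball (0:E3) 1) := by
  rw [sphereVol, Measure.toSphere_apply_univ]
  norm_num [finrank_euclideanSpace_fin]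

lemma uniSphere_apply {A : Set ↥S2} (hA : MeasurableSet A) :
    uniSphere A = (volume (ball (0:E3) 1))⁻¹
      * volume (Set.Ioo (0:ℝ) 1 • (Subtype.val '' A)) := by
  have h1 : sphereVol A = 3 * volume (Set.Ioo (0:ℝ) 1 • (Subtype.val '' A)) := by
    rw [sphereVol, Measure.toSphere_apply' _ hA]
    norm_num [finrank_euclideanSpace_fin]
  rw [uniSphere, Measure.smul_apply, smul_eq_mul, sphereVol_univ, h1,
    ENNReal.mul_inv (Or.inl (by norm_num)) (Or.inl (by norm_num)), mul_mul_mul_comm,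
    ENNReal.inv_mul_cancel (by norm_num) (by norm_num), one_mul]

lemma uniSphere_univ : uniSphere (Set.univ : Set ↥S2) = 1 := by
  rw [uniSphere, Measure.smul_apply, smul_eq_mul]
  exact ENNReal.inv_mul_cancel
    (by rw [sphereVol_univ]; exact mul_ne_zero (by norm_num) vB_ne_zero)
    (by rw [sphereVol_univ]; exact ENNReal.mul_ne_top (by norm_num) vB_ne_top)

instance : IsFiniteMeasure uniSphere :=
  ⟨by rw [uniSphere_univ]; exact ENNReal.one_lt_top⟩

lemma cap_bound (u : E3) (hu : ‖u‖ = 1) (hw : cross u e3 ≠ 0) {a b : ℝ}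
    (ha : 0 ≤ a) (hb : 0 ≤ b) :
    uniSphere {v : ↥S2 | ‖cross u ↑v‖ ≤ a ∧ |⟪e3, cross u ↑v⟫| ≤ b}
      ≤ (volume (ball (0:E3) 1))⁻¹ * ENNReal.ofReal (8 * (b / ‖cross u e3‖) * a) := by
  have hc : Continuous fun v : ↥S2 => cross u (v : E3) :=
    continuous_cross.comp (continuous_const.prodMk continuous_subtype_val)
  have hA : MeasurableSet {v : ↥S2 | ‖cross u ↑v‖ ≤ a ∧ |⟪e3, cross u ↑v⟫| ≤ b} :=
    (isClosed_and' (isClosed_le hc.norm continuous_const)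
      (isClosed_le (continuous_const.inner hc).abs continuous_const)).measurableSet
  rw [uniSphere_apply hA]
  refine mul_le_mul_right (le_trans (measure_mono ?_) (sector_vol_bound u hu hw ha hb)) _
  rintro x hx
  rw [Set.mem_smul] at hx
  obtain ⟨t, ht, y, hy, rfl⟩ := hx
  obtain ⟨v, hv, rfl⟩ := hy
  obtain ⟨hv1, hv2⟩ := hv
  have hvn : ‖(v : E3)‖ = 1 := mem_sphere_zero_iff_norm.mp v.2
  have ht0 : 0 < t := ht.1
  have ht1 : t ≤ 1 := ht.2.le
  refine ⟨?_, ?_, ?_⟩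
  · rw [norm_smul, hvn, Real.norm_eq_abs, abs_of_pos ht0, mul_one]; exact ht1
  · rw [cross_smul_right, norm_smul, Real.norm_eq_abs, abs_of_pos ht0]
    calc t * ‖cross u ↑v‖ ≤ 1 * a :=
        mul_le_mul ht1 hv1 (norm_nonneg _) zero_le_one
      _ = a := one_mul a
  · rw [real_inner_smul_right, abs_mul, abs_of_pos ht0]
    have h2 : ⟪cross u e3, (v : E3)⟫ = -⟪e3, cross u ↑v⟫ := by
      have := triple u (v : E3); linarith
    calc t * |⟪cross u e3, (v:E3)⟫| = t * |⟪e3, cross u ↑v⟫| := by rw [h2, abs_neg]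
      _ ≤ 1 * b := mul_le_mul ht1 hv2 (abs_nonneg _) zero_le_one
      _ = b := one_mul b

lemma ring_bound {c : ℝ} (hc : 0 ≤ c) :
    uniSphere {v : ↥S2 | ‖cross (↑v) e3‖ ≤ c}
      ≤ (volume (ball (0:E3) 1))⁻¹ * ENNReal.ofReal (8 * c^2) := by
  have hpm : Continuous fun v : ↥S2 => ((v : E3), (e3 : E3)) :=
    continuous_subtype_val.prodMk continuous_const
  have hcc : Continuous fun v : ↥S2 => cross (v : E3) e3 := continuous_cross.comp hpm
  have hA : MeasurableSet {v : ↥S2 | ‖cross (↑v) e3‖ ≤ c} :=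
    (isClosed_le hcc.norm continuous_const).measurableSet
  rw [uniSphere_apply hA]
  refine mul_le_mul_right ?_ _
  have hsub : Set.Ioo (0:ℝ) 1 • (Subtype.val '' {v : ↥S2 | ‖cross (↑v) e3‖ ≤ c})
      ⊆ {y : E3 | |y 0| ≤ 1 ∧ |y 1| ≤ c ∧ |y 2| ≤ c} := by
    rintro x hx
    rw [Set.mem_smul] at hx
    obtain ⟨t, ht, y, hy, rfl⟩ := hx
    obtain ⟨v, hv, rfl⟩ := hy
    have hvn : ‖(v : E3)‖ = 1 := mem_sphere_zero_iff_norm.mp v.2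
    have hxn : ‖t • (v : E3)‖ ≤ 1 := by
      rw [norm_smul, hvn, Real.norm_eq_abs, abs_of_pos ht.1, mul_one]; exact ht.2.le
    have hcr : ‖cross (t • (v:E3)) e3‖ ≤ c := by
      rw [cross_smul_left, norm_smul, Real.norm_eq_abs, abs_of_pos ht.1]
      calc t * ‖cross (↑v) e3‖ ≤ 1 * c := mul_le_mul ht.2.le hv (norm_nonneg _) zero_le_one
        _ = c := one_mul c
    set x := t • (v : E3) with hxdef
    refine ⟨le_trans (abs_coord_le x 0) hxn, ?_, ?_⟩
    · have h1 : cross x e3 2 = -(x 1) := by simp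
      have := abs_coord_le (cross x e3) 2
      rw [h1, abs_neg] at this
      exact le_trans this hcr
    · have h1 : cross x e3 1 = x 2 := by simp
      have := abs_coord_le (cross x e3) 1
      rw [h1] at this
      exact le_trans this hcr
  calc volume (Set.Ioo (0:ℝ) 1 • (Subtype.val '' {v : ↥S2 | ‖cross (↑v) e3‖ ≤ c}))
      ≤ volume {y : E3 | |y 0| ≤ 1 ∧ |y 1| ≤ c ∧ |y 2| ≤ c} := measure_mono hsub
    _ = ENNReal.ofReal (2*1) * ENNReal.ofReal (2*c) * ENNReal.ofReal (2*c) := volume_box 1 c c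
    _ = ENNReal.ofReal (8 * c^2) := by
        rw [← ENNReal.ofReal_mul (by norm_num), ← ENNReal.ofReal_mul (by positivity)]
        congr 1
        ring

end TrapAux

namespace TrapAux
open Set Metric
open scoped Pointwise ENNReal

lemma exists_dyadic {r : ℝ} (h0 : 0 < r) (h1 : r ≤ 1) :
    ∃ j : ℕ, ((1:ℝ)/2)^(j+1) < r ∧ r ≤ ((1:ℝ)/2)^j := by
  have hex : ∃ n : ℕ, ((1:ℝ)/2)^(n+1) < r := by
    obtain ⟨n, hn⟩ := exists_pow_lt_of_lt_one h0 (by norm_num : (1:ℝ)/2 < 1)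
    exact ⟨n, lt_of_le_of_lt
      (pow_le_pow_of_le_one (by norm_num) (by norm_num) (Nat.le_succ n)) hn⟩
  classical
  refine ⟨Nat.find hex, Nat.find_spec hex, ?_⟩
  rcases h : Nat.find hex with _ | j'
  · simpa using h1
  · have hmin : ¬ ((1:ℝ)/2)^(j'+1) < r := Nat.find_min hex (by omega)
    exact not_lt.mp hmin

lemma key_bound {a b : ℝ} (ha : 0 ≤ a) (hb : 0 ≤ b) :
    (uniSphere.prod uniSphere)
        {q : ↥S2 × ↥S2 | ‖cross (↑q.1) (↑q.2)‖ ≤ a ∧ |⟪e3, cross (↑q.1) (↑q.2)⟫| ≤ b}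
      ≤ (volume (ball (0:E3) 1))⁻¹ * ((volume (ball (0:E3) 1))⁻¹
          * ENNReal.ofReal (256 * b * a)) := by
  set V := volume (ball (0:E3) 1) with hV
  set T : Set (↥S2 × ↥S2) :=
    {q | ‖cross (↑q.1) (↑q.2)‖ ≤ a ∧ |⟪e3, cross (↑q.1) (↑q.2)⟫| ≤ b} with hTdef
  have hcq : Continuous fun q : ↥S2 × ↥S2 => cross (↑q.1) (↑q.2) := by
    have hpm : Continuous fun q : ↥S2 × ↥S2 => (((q.1 : E3)), ((q.2 : E3))) :=
      (continuous_subtype_val.comp continuous_fst).prodMk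
        (continuous_subtype_val.comp continuous_snd)
    exact continuous_cross.comp hpm
  have hT : MeasurableSet T :=
    (isClosed_and' (isClosed_le hcq.norm continuous_const)
      (isClosed_le (continuous_const.inner hcq).abs continuous_const)).measurableSet
  set A : ℕ → Set ↥S2 := fun j =>
    {v | ((1:ℝ)/2)^(j+1) < ‖cross (↑v) e3‖ ∧ ‖cross (↑v) e3‖ ≤ ((1:ℝ)/2)^j} with hAdef
  have hpm2 : Continuous fun v : ↥S2 => ((v : E3), (e3 : E3)) :=
    continuous_subtype_val.prodMk continuous_const
  have hcc : Continuous fun v : ↥S2 => cross (v : E3) e3 := continuous_cross.comp hpm2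
  have hAj : ∀ j, MeasurableSet (A j) := fun j =>
    ((isOpen_lt continuous_const hcc.norm).measurableSet).inter
      (isClosed_le hcc.norm continuous_const).measurableSet
  have hN : uniSphere {v : ↥S2 | cross (↑v) e3 = 0} = 0 := by
    have hsub : {v : ↥S2 | cross (↑v) e3 = 0} ⊆ {v : ↥S2 | ‖cross (↑v) e3‖ ≤ 0} := by
      intro v hv
      simp only [Set.mem_setOf_eq] at hv ⊢
      rw [hv, norm_zero]
    refine le_antisymm ?_ zero_le
    calc uniSphere {v : ↥S2 | cross (↑v) e3 = 0}
        ≤ uniSphere {v : ↥S2 | ‖cross (↑v) e3‖ ≤ 0} := measure_mono hsub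
      _ ≤ V⁻¹ * ENNReal.ofReal (8 * (0:ℝ)^2) := ring_bound le_rfl
      _ = 0 := by norm_num
  have hcover : T ⊆ (({v : ↥S2 | cross (↑v) e3 = 0} ×ˢ (Set.univ : Set ↥S2))
      ∪ ⋃ j, (T ∩ (A j ×ˢ (Set.univ : Set ↥S2)))) := by
    rintro ⟨u, v⟩ hq
    by_cases h0 : cross (↑u) e3 = 0
    · exact Or.inl ⟨h0, trivial⟩
    · have hr0 : 0 < ‖cross (↑u) e3‖ := norm_pos_iff.2 h0
      have hr1 : ‖cross (↑u) e3‖ ≤ 1 :=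
        norm_cross_le _ _ (mem_sphere_zero_iff_norm.mp u.2) norm_e3
      obtain ⟨j, hj1, hj2⟩ := exists_dyadic hr0 hr1
      exact Or.inr (Set.mem_iUnion.2 ⟨j, hq, ⟨hj1, hj2⟩, trivial⟩)
  have hstep : ∀ j : ℕ, (uniSphere.prod uniSphere) (T ∩ (A j ×ˢ (Set.univ : Set ↥S2)))
      ≤ V⁻¹ * (V⁻¹ * ENNReal.ofReal (128 * b * a)) * (ENNReal.ofReal (1/2))^j := by
    intro j
    have hTA : MeasurableSet (T ∩ (A j ×ˢ (Set.univ : Set ↥S2))) :=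
      hT.inter ((hAj j).prod MeasurableSet.univ)
    rw [Measure.prod_apply hTA]
    have hpt : ∀ u : ↥S2, uniSphere (Prod.mk u ⁻¹' (T ∩ (A j ×ˢ (Set.univ : Set ↥S2))))
        ≤ (A j).indicator (fun _ => V⁻¹ * ENNReal.ofReal (8 * (b * 2^(j+1)) * a)) u := by
      intro u
      by_cases hu : u ∈ A j
      · rw [Set.indicator_of_mem hu]
        have hrlow : ((1:ℝ)/2)^(j+1) < ‖cross (↑u) e3‖ := hu.1
        have hrpos : 0 < ‖cross (↑u) e3‖ :=
          lt_trans (pow_pos (by norm_num) (j+1)) hrlow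
        have hw0 : cross (↑u) e3 ≠ 0 := norm_pos_iff.1 hrpos
        have hsub2 : Prod.mk u ⁻¹' (T ∩ (A j ×ˢ (Set.univ : Set ↥S2)))
            ⊆ {v : ↥S2 | ‖cross (↑u) (↑v)‖ ≤ a ∧ |⟪e3, cross (↑u) (↑v)⟫| ≤ b} :=
          fun v hv => hv.1
        refine le_trans (measure_mono hsub2) (le_trans
          (cap_bound (↑u) (mem_sphere_zero_iff_norm.mp u.2) hw0 ha hb) ?_)
        refine mul_le_mul_right (ENNReal.ofReal_le_ofReal ?_) _
        have hdiv : b / ‖cross (↑u) e3‖ ≤ b * 2^(j+1) := by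
          rw [div_eq_mul_inv]
          refine mul_le_mul_of_nonneg_left ?_ hb
          have h2 : ((2:ℝ)^(j+1))⁻¹ < ‖cross (↑u) e3‖ := by
            have heq : ((2:ℝ)^(j+1))⁻¹ = ((1:ℝ)/2)^(j+1) := by
              rw [one_div, inv_pow]
            rw [heq]
            exact hrlow
          calc ‖cross (↑u) e3‖⁻¹ ≤ (((2:ℝ)^(j+1))⁻¹)⁻¹ :=
              inv_anti₀ (by positivity) h2.le
            _ = (2:ℝ)^(j+1) := inv_inv _
        gcongr
      · rw [Set.indicator_of_notMem hu]
        have hempty : Prod.mk u ⁻¹' (T ∩ (A j ×ˢ (Set.univ : Set ↥S2))) = ∅ := by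
          apply Set.eq_empty_of_forall_notMem
          intro v hvmem
          exact hu hvmem.2.1
        rw [hempty, measure_empty]
    calc ∫⁻ u, uniSphere (Prod.mk u ⁻¹' (T ∩ (A j ×ˢ (Set.univ : Set ↥S2)))) ∂uniSphere
        ≤ ∫⁻ u, (A j).indicator
            (fun _ => V⁻¹ * ENNReal.ofReal (8 * (b * 2^(j+1)) * a)) u ∂uniSphere :=
          lintegral_mono hpt
      _ = V⁻¹ * ENNReal.ofReal (8 * (b * 2^(j+1)) * a) * uniSphere (A j) :=
          lintegral_indicator_const (hAj j) _
      _ ≤ V⁻¹ * ENNReal.ofReal (8 * (b * 2^(j+1)) * a)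
            * (V⁻¹ * ENNReal.ofReal (8 * (((1:ℝ)/2)^j)^2)) := by
          refine mul_le_mul_right ?_ _
          refine le_trans (measure_mono (fun v hv => hv.2)) (ring_bound (by positivity))
      _ = V⁻¹ * (V⁻¹ * ENNReal.ofReal (128 * b * a)) * (ENNReal.ofReal (1/2))^j := by
          have hXY : ENNReal.ofReal (8 * (b * 2^(j+1)) * a)
              * ENNReal.ofReal (8 * (((1:ℝ)/2)^j)^2)
              = ENNReal.ofReal (128 * b * a) * (ENNReal.ofReal (1/2))^j := by
            rw [← ENNReal.ofReal_pow (by norm_num), ← ENNReal.ofReal_mul (by positivity),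
              ← ENNReal.ofReal_mul (by positivity)]
            congr 1
            have h2j : (2:ℝ)^(j+1) * (((1:ℝ)/2)^j)^2 = 2 * ((1:ℝ)/2)^j := by
              rw [one_div, inv_pow, pow_succ]
              have hne : (2:ℝ)^j ≠ 0 := by positivity
              field_simp
            linear_combination (64*b*a) * h2j
          calc V⁻¹ * ENNReal.ofReal (8 * (b * 2^(j+1)) * a)
              * (V⁻¹ * ENNReal.ofReal (8 * (((1:ℝ)/2)^j)^2))
              = V⁻¹ * (V⁻¹ * (ENNReal.ofReal (8 * (b * 2^(j+1)) * a)
                  * ENNReal.ofReal (8 * (((1:ℝ)/2)^j)^2))) := by ring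
            _ = V⁻¹ * (V⁻¹ * (ENNReal.ofReal (128 * b * a) * (ENNReal.ofReal (1/2))^j)) := by
                rw [hXY]
            _ = V⁻¹ * (V⁻¹ * ENNReal.ofReal (128 * b * a)) * (ENNReal.ofReal (1/2))^j := by
                ring
  have hW : ENNReal.ofReal (1/2) = (2 : ℝ≥0∞)⁻¹ := by
    rw [one_div, ENNReal.ofReal_inv_of_pos two_pos]
    norm_num
  calc (uniSphere.prod uniSphere) T
      ≤ (uniSphere.prod uniSphere) (({v : ↥S2 | cross (↑v) e3 = 0} ×ˢ (Set.univ : Set ↥S2))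
          ∪ ⋃ j, (T ∩ (A j ×ˢ (Set.univ : Set ↥S2)))) := measure_mono hcover
    _ ≤ (uniSphere.prod uniSphere) ({v : ↥S2 | cross (↑v) e3 = 0} ×ˢ (Set.univ : Set ↥S2))
          + (uniSphere.prod uniSphere) (⋃ j, (T ∩ (A j ×ˢ (Set.univ : Set ↥S2)))) :=
        measure_union_le _ _
    _ ≤ 0 + ∑' j : ℕ, (uniSphere.prod uniSphere) (T ∩ (A j ×ˢ (Set.univ : Set ↥S2))) := by
        refine add_le_add ?_ (measure_iUnion_le _)
        rw [Measure.prod_prod, hN, zero_mul]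
    _ ≤ 0 + ∑' j : ℕ, (V⁻¹ * (V⁻¹ * ENNReal.ofReal (128 * b * a)) * (ENNReal.ofReal (1/2))^j) :=
        add_le_add_right (ENNReal.tsum_le_tsum hstep) 0
    _ = V⁻¹ * (V⁻¹ * ENNReal.ofReal (128 * b * a)) * 2 := by
        rw [zero_add, ENNReal.tsum_mul_left, ENNReal.tsum_geometric, hW,
          ENNReal.one_sub_inv_two, inv_inv]
    _ = V⁻¹ * (V⁻¹ * ENNReal.ofReal (256 * b * a)) := by
        have h2 : ENNReal.ofReal (128 * b * a) * 2 = ENNReal.ofReal (256 * b * a) := by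
          rw [show (2:ℝ≥0∞) = ENNReal.ofReal 2 by norm_num,
            ← ENNReal.ofReal_mul (by positivity)]
          congr 1
          ring
        calc V⁻¹ * (V⁻¹ * ENNReal.ofReal (128 * b * a)) * 2
            = V⁻¹ * (V⁻¹ * (ENNReal.ofReal (128 * b * a) * 2)) := by ring
          _ = V⁻¹ * (V⁻¹ * ENNReal.ofReal (256 * b * a)) := by rw [h2]

end TrapAux

namespace TrapAux
open Set Metric

lemma cross_antisymm (u v : E3) : cross u v = -cross v u := by
  ext i
  fin_cases i <;> beta_reduce <;>
    simp only [Fin.zero_eta, Fin.mk_one, Fin.reduceFinMk, cross0, cross1, cross2,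
      PiLp.neg_apply] <;> ring

lemma norm_cross_comm (u v : E3) : ‖cross v u‖ = ‖cross u v‖ := by
  rw [cross_antisymm u v, norm_neg]

lemma abs_inner_cross_comm (u v : E3) : |⟪e3, cross v u⟫| = |⟪e3, cross u v⟫| := by
  rw [cross_antisymm u v, inner_neg_right, abs_neg]

end TrapAux


open scoped ENNReal in
/-- For every integer `k ≥ 4` there is `C_k > 0` such that for all `s ≥ 0`,
`λ({(u,h,v) : h ≥ max(10, s/(2k)), ‖u × v‖ ≤ 2/h, (h/4)^{k-3}·h·|⟪e, u × v⟫| ≤ 2})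
  ≤ C_k/(1+s)^{k-2}`. -/
theorem trapping_time_Nk_measure_bound :
    ∀ k : ℕ, 4 ≤ k → ∃ C : ℝ, 0 < C ∧ ∀ s : ℝ, 0 ≤ s →
      lambdaMeasure {p : ↥S2 × ℝ × ↥S2 |
          max 10 (s / (2 * k)) ≤ p.2.1 ∧
          ‖cross (p.1 : E3) (p.2.2 : E3)‖ ≤ 2 / p.2.1 ∧
          (p.2.1 / 4) ^ (k - 3) * p.2.1 * |⟪e3, cross (p.1 : E3) (p.2.2 : E3)⟫| ≤ 2}
        ≤ ENNReal.ofReal (C / (1 + s) ^ (k - 2)) := by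
  classical
  intro k hk
  set vb : ℝ := (volume (Metric.ball (0:E3) 1)).toReal with hvbdef
  have hvb0 : 0 < vb := ENNReal.toReal_pos TrapAux.vB_ne_zero TrapAux.vB_ne_top
  set K2 : ℕ := k - 2 with hK2def
  set K3 : ℕ := k - 3 with hK3def
  have hK23 : K2 = K3 + 1 := by omega
  have hK2pos : (0:ℝ) < (K2 : ℝ) := by
    have : 0 < K2 := by omega
    exact_mod_cast this
  set ck : ℝ := 1024 * 4 ^ K3 with hckdef
  have hck0 : 0 < ck := by positivity
  have hkR : (4:ℝ) ≤ (k:ℝ) := by exact_mod_cast hk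
  refine ⟨vb⁻¹ * vb⁻¹ * ck * (3*(k:ℝ))^K2 / (K2:ℝ), by positivity, ?_⟩
  intro s hs
  set M : ℝ := max 10 (s / (2 * (k:ℝ))) with hMdef
  have hM10 : (10:ℝ) ≤ M := le_max_left _ _
  have hM0 : (0:ℝ) < M := by linarith
  set V : ℝ≥0∞ := volume (Metric.ball (0:E3) 1) with hVdef
  -- reshuffled set
  set S' : Set (ℝ × (↥S2 × ↥S2)) :=
    {x | M ≤ x.1 ∧ ‖cross (↑x.2.1) (↑x.2.2)‖ ≤ 2 / x.1 ∧
       (x.1 / 4) ^ (k - 3) * x.1 * |⟪e3, cross (↑x.2.1) (↑x.2.2)⟫| ≤ 2} with hS'def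
  have hcrx : Continuous fun x : ℝ × (↥S2 × ↥S2) => cross (↑x.2.1) (↑x.2.2) := by
    have hpm : Continuous fun x : ℝ × (↥S2 × ↥S2) => ((x.2.1 : E3), (x.2.2 : E3)) :=
      (continuous_subtype_val.comp (continuous_fst.comp continuous_snd)).prodMk
        (continuous_subtype_val.comp (continuous_snd.comp continuous_snd))
    exact TrapAux.continuous_cross.comp hpm
  have hS' : MeasurableSet S' := by
    have hm3 : Measurable fun x : ℝ × (↥S2 × ↥S2) =>
        (x.1 / 4) ^ (k - 3) * x.1 * |⟪e3, cross (↑x.2.1) (↑x.2.2)⟫| :=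
      (((measurable_fst.div_const 4).pow_const (k-3)).mul measurable_fst).mul
        (continuous_const.inner hcrx).abs.measurable
    have hs1 : MeasurableSet {x : ℝ × (↥S2 × ↥S2) | M ≤ x.1} :=
      measurableSet_le measurable_const measurable_fst
    have hs2 : MeasurableSet {x : ℝ × (↥S2 × ↥S2) | ‖cross (↑x.2.1) (↑x.2.2)‖ ≤ 2 / x.1} :=
      measurableSet_le hcrx.norm.measurable (measurable_const.div measurable_fst)
    have hs3 : MeasurableSet {x : ℝ × (↥S2 × ↥S2) |
        (x.1/4)^(k-3)*x.1*|⟪e3, cross (↑x.2.1) (↑x.2.2)⟫| ≤ 2} :=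
      measurableSet_le hm3 measurable_const
    exact hs1.inter (hs2.inter hs3)
  -- measure-preserving reshuffle
  have m1 := MeasureTheory.Measure.measurePreserving_swap
    (μ := uniSphere) (ν := (volume.restrict (Set.Ici (0:ℝ))).prod uniSphere)
  have m2 := MeasureTheory.measurePreserving_prodAssoc
    (volume.restrict (Set.Ici (0:ℝ))) uniSphere uniSphere
  have mφ := m2.comp m1
  have hpre : {p : ↥S2 × ℝ × ↥S2 |
      max 10 (s / (2 * k)) ≤ p.2.1 ∧
      ‖cross (p.1 : E3) (p.2.2 : E3)‖ ≤ 2 / p.2.1 ∧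
      (p.2.1 / 4) ^ (k - 3) * p.2.1 * |⟪e3, cross (p.1 : E3) (p.2.2 : E3)⟫| ≤ 2}
      = (⇑(MeasurableEquiv.prodAssoc) ∘ Prod.swap) ⁻¹' S' := by
    ext ⟨u, h, v⟩
    simp only [Set.mem_setOf_eq, Set.mem_preimage, Function.comp_apply, Prod.swap_prod_mk,
      MeasurableEquiv.prodAssoc, MeasurableEquiv.coe_mk, Equiv.prodAssoc_apply, hS'def]
    rw [TrapAux.norm_cross_comm (↑u) (↑v), TrapAux.abs_inner_cross_comm (↑u) (↑v)]
  rw [lambdaMeasure, hpre, mφ.measure_preimage hS'.nullMeasurableSet]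
  -- slicing
  rw [MeasureTheory.Measure.prod_apply hS']
  have hsec : ∀ h : ℝ,
      (uniSphere.prod uniSphere) (Prod.mk h ⁻¹' S')
        ≤ (Set.Ici M).indicator
            (fun h => V⁻¹ * (V⁻¹
              * ENNReal.ofReal (256 * (2 * 4^K3 / h^K2) * (2/h)))) h := by
    intro h
    by_cases hMh : M ≤ h
    · rw [Set.indicator_of_mem (Set.mem_Ici.mpr hMh)]
      have hh0 : (0:ℝ) < h := by linarith
      have hsub : Prod.mk h ⁻¹' S'
          ⊆ {q : ↥S2 × ↥S2 | ‖cross (↑q.1) (↑q.2)‖ ≤ 2/h ∧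
              |⟪e3, cross (↑q.1) (↑q.2)⟫| ≤ 2 * 4^K3 / h^K2} := by
        rintro ⟨w1, w2⟩ ⟨_, hp2, hp3⟩
        refine ⟨hp2, ?_⟩
        have hq : (0:ℝ) < (h/4)^K3 * h := by positivity
        have h1 : |⟪e3, cross (↑w1) (↑w2)⟫| ≤ 2 / ((h/4)^K3 * h) := by
          rw [le_div_iff₀ hq]
          have hrw : (h / 4) ^ (k - 3) = (h/4)^K3 := by rw [hK3def]
          nlinarith [hp3]
        have h2 : 2 / ((h/4)^K3 * h) = 2 * 4^K3 / h^K2 := by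
          rw [div_pow, hK23, pow_succ]
          have h4 : (4:ℝ)^K3 ≠ 0 := by positivity
          have hh : h ≠ 0 := ne_of_gt hh0
          field_simp
        rw [← h2]
        exact h1
      refine le_trans (measure_mono hsub) ?_
      exact TrapAux.key_bound (by positivity) (by positivity)
    · rw [Set.indicator_of_notMem (fun hc => hMh (Set.mem_Ici.mp hc))]
      have hempty : Prod.mk h ⁻¹' S' = ∅ :=
        Set.eq_empty_of_forall_notMem fun q hq => hMh hq.1
      rw [hempty, measure_empty]
  refine le_trans (MeasureTheory.lintegral_mono hsec) ?_
  rw [MeasureTheory.lintegral_indicator measurableSet_Ici,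
    MeasureTheory.Measure.restrict_restrict measurableSet_Ici,
    Set.inter_eq_left.mpr (Set.Ici_subset_Ici.mpr (le_of_lt hM0))]
  have hVinv_ne_top : V⁻¹ ≠ ⊤ := by
    rw [ENNReal.inv_ne_top]
    exact TrapAux.vB_ne_zero
  rw [MeasureTheory.lintegral_const_mul' _ _ hVinv_ne_top,
    MeasureTheory.lintegral_const_mul' _ _ hVinv_ne_top]
  -- compute the h-integral
  set r : ℝ := -(((K2 + 1 : ℕ)) : ℝ) with hrdef
  have hr1 : r < -1 := by
    have h3 : (3:ℝ) ≤ ((K2 + 1 : ℕ) : ℝ) := by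
      have : 3 ≤ K2 + 1 := by omega
      exact_mod_cast this
    rw [hrdef]; linarith
  have hIcongr : ∫⁻ h in Set.Ici M, ENNReal.ofReal (256 * (2 * 4^K3 / h^K2) * (2/h))
      = ∫⁻ h in Set.Ioi M, ENNReal.ofReal (ck * h ^ r) := by
    rw [MeasureTheory.setLIntegral_congr (Filter.EventuallyEq.symm Ioi_ae_eq_Ici)]
    refine MeasureTheory.setLIntegral_congr_fun measurableSet_Ioi ?_
    intro h hh
    have hh0 : (0:ℝ) < h := lt_trans hM0 hh
    beta_reduce
    congr 1
    rw [hrdef, Real.rpow_neg hh0.le, Real.rpow_natCast]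
    have hpow : h ^ (K2 + 1) = h^K2 * h := pow_succ h K2
    rw [hpow]
    field_simp
    ring
  rw [hIcongr]
  have hint : MeasureTheory.IntegrableOn (fun h : ℝ => ck * h ^ r) (Set.Ioi M) :=
    (integrableOn_Ioi_rpow_of_lt hr1 hM0).const_mul ck
  have hnn : 0 ≤ᵐ[volume.restrict (Set.Ioi M)] fun h : ℝ => ck * h ^ r := by
    refine (MeasureTheory.ae_restrict_mem measurableSet_Ioi).mono fun x hx => ?_
    have hx0 : (0:ℝ) < x := lt_trans hM0 hx
    positivity
  rw [← MeasureTheory.ofReal_integral_eq_lintegral_ofReal hint hnn,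
    MeasureTheory.integral_const_mul, integral_Ioi_rpow_of_lt hr1 hM0]
  -- final real-number comparison
  have hVV : V = ENNReal.ofReal vb := (ENNReal.ofReal_toReal TrapAux.vB_ne_top).symm
  have hVinv : V⁻¹ = ENNReal.ofReal vb⁻¹ := by
    rw [hVV, ← ENNReal.ofReal_inv_of_pos hvb0]
  rw [hVinv, ← ENNReal.ofReal_mul (by positivity), ← ENNReal.ofReal_mul (by positivity)]
  apply ENNReal.ofReal_le_ofReal
  -- rpow to pow
  have hr2 : r + 1 = -(K2:ℝ) := by
    rw [hrdef]
    push_cast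
    ring
  have hMpow : M ^ (r+1) = (M ^ K2)⁻¹ := by
    rw [hr2, Real.rpow_neg hM0.le, Real.rpow_natCast]
  rw [hMpow, hr2]
  have hval : -(M ^ K2)⁻¹ / (-(K2:ℝ)) = (M ^ K2)⁻¹ / (K2:ℝ) := by
    rw [neg_div_neg_eq]
  rw [hval]
  -- core inequality
  have h1s : 1 + s ≤ 3 * (k:ℝ) * M := by
    have hsM : s ≤ 2 * (k:ℝ) * M := by
      have h2k : (0:ℝ) < 2 * (k:ℝ) := by linarith
      have := le_max_right (10:ℝ) (s / (2 * (k:ℝ)))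
      calc s = (s / (2*(k:ℝ))) * (2*(k:ℝ)) := by field_simp
        _ ≤ M * (2*(k:ℝ)) := mul_le_mul_of_nonneg_right this h2k.le
        _ = 2 * (k:ℝ) * M := by ring
    nlinarith
  have hpow2 : (1 + s) ^ K2 ≤ (3*(k:ℝ))^K2 * M ^ K2 := by
    rw [← mul_pow]
    exact pow_le_pow_left₀ (by linarith) h1s K2
  have hkey : (M ^ K2)⁻¹ ≤ (3*(k:ℝ))^K2 / (1+s)^K2 := by
    rw [le_div_iff₀ (by positivity)]
    have hMK : (0:ℝ) < M ^ K2 := by positivity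
    calc (M ^ K2)⁻¹ * (1+s)^K2 ≤ (M ^ K2)⁻¹ * ((3*(k:ℝ))^K2 * M ^ K2) :=
        mul_le_mul_of_nonneg_left hpow2 (by positivity)
      _ = (3*(k:ℝ))^K2 := by field_simp
  calc vb⁻¹ * (vb⁻¹ * (ck * ((M ^ K2)⁻¹ / (K2:ℝ))))
      = (vb⁻¹ * vb⁻¹ * ck / (K2:ℝ)) * (M ^ K2)⁻¹ := by ring
    _ ≤ (vb⁻¹ * vb⁻¹ * ck / (K2:ℝ)) * ((3*(k:ℝ))^K2 / (1+s)^K2) :=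
        mul_le_mul_of_nonneg_left hkey (by positivity)
    _ = vb⁻¹ * vb⁻¹ * ck * (3*(k:ℝ))^K2 / (K2:ℝ) / (1 + s) ^ K2 := by ring
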